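/- arXiv:1001.3590 — 3 statements merged into one kernel-verified Lean document; each statement's English description precedes it below -/
import Mathlib

section
/- A kernel k on X with values in L(A,B) is completely positive if and only if for every finite subset {x_1,…,x_n} of X the Schur map M_n(A) → M_n(B), (a_{ij}) ↦ (k(x_i,x_j)[a_{ij}]), is a completely positive map. -/
open scoped ComplexOrder InnerProductSpace Matrix

section Defs

variable {X : Type*}

/-- Positivity in the C*-algebra of `ι × ι` matrices over `R`: an element is
positive iff it factors as `Nᴴ * N`. -/
def MatPos {R ι : Type*} [Fintype ι] [NonUnitalSemiring R] [StarRing R]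
    (M : Matrix ι ι R) : Prop :=
  ∃ N : Matrix ι ι R, M = Nᴴ * N

/-- `‖M‖ ≤ c` in the C*-algebra of `ι × ι` matrices over the unital C*-algebra `R`,
expressed via positivity of `c ^ 2 • 1 - Mᴴ * M`. -/
def MatNormLe {R ι : Type*} [Fintype ι] [DecidableEq ι] [Ring R] [StarRing R] [Module ℂ R]
    (M : Matrix ι ι R) (c : ℝ) : Prop :=
  0 ≤ c ∧ MatPos (((c : ℂ) ^ 2) • (1 : Matrix ι ι R) - Mᴴ * M)

variable {A : Type*} [CStarAlgebra A]
variable {B : Type*} [CStarAlgebra B] [PartialOrder B] [StarOrderedRing B]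

/-- A kernel on `X` with values in `L(A,B)` is completely positive. -/
def IsCPKernel (k : X → X → A →L[ℂ] B) : Prop :=
  ∀ (n : ℕ) (x : Fin n → X) (a : Fin n → A) (b : Fin n → B),
    0 ≤ ∑ i : Fin n, ∑ j : Fin n, star (b i) * (k (x i) (x j) (star (a i) * a j)) * b j

/-- The adjoint kernel `k*`, given by `k*(x,y)[a] = (k(y,x)[a*])*`. -/
noncomputable def kadj (k : X → X → A →L[ℂ] B) (x y : X) : A →L[ℂ] B :=
  { toFun := fun a => star (k y x (star a))
    map_add' := by intros; simp
    map_smul' := by intros; simp [star_smul]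
    cont := continuous_star.comp ((k y x).continuous.comp continuous_star) }

@[simp] theorem kadj_apply (k : X → X → A →L[ℂ] B) (x y : X) (a : A) :
    kadj k x y a = star (k y x (star a)) := rfl

/-- The Schur product map `M_n(A) → M_n(B)` associated to the kernel `k` and the
finite family `x_1, …, x_n` in `X`. -/
noncomputable def schurMap {n : ℕ} (k : X → X → A →L[ℂ] B) (x : Fin n → X)
    (M : Matrix (Fin n) (Fin n) A) : Matrix (Fin n) (Fin n) B :=
  Matrix.of fun i j => k (x i) (x j) (M i j)

/-- The `m`-th amplification `φ ⊗ id_{M_m}` of a map `φ : M_ι(A) → M_ι(B)`, realized on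
`M_{m·ι}` via the canonical identification `M_m(M_ι(·)) ≅ M_{m·ι}(·)`. -/
def ampl {ι : Type*} (φ : Matrix ι ι A → Matrix ι ι B) (m : ℕ)
    (M : Matrix (Fin m × ι) (Fin m × ι) A) : Matrix (Fin m × ι) (Fin m × ι) B :=
  Matrix.of fun p q => φ (Matrix.of fun i j => M (p.1, i) (q.1, j)) p.2 q.2

/-- A map `M_ι(A) → M_ι(B)` is completely positive: all amplifications preserve positivity. -/
def IsCPMap {ι : Type*} [Fintype ι] (φ : Matrix ι ι A → Matrix ι ι B) : Prop :=
  ∀ (m : ℕ) (M : Matrix (Fin m × ι) (Fin m × ι) A), MatPos M → MatPos (ampl φ m M)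

/-- A map `M_ι(A) → M_ι(B)` is completely bounded: the norms of all amplifications
are uniformly bounded by some `C`. -/
def IsCBMap {ι : Type*} [Fintype ι] [DecidableEq ι] (φ : Matrix ι ι A → Matrix ι ι B) : Prop :=
  ∃ C : ℝ, ∀ (m : ℕ) (M : Matrix (Fin m × ι) (Fin m × ι) A) (c : ℝ),
    MatNormLe M c → MatNormLe (ampl φ m M) (C * c)

/-- A kernel is completely bounded if for every finite family of points the associated
Schur product map is completely bounded. -/
def IsCBKernel (k : X → X → A →L[ℂ] B) : Prop :=
  ∀ (n : ℕ) (x : Fin n → X), IsCBMap (schurMap k x)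

/-- Complete positivity for a kernel on `X` with values in the maps `A → M₂(B)`,
positivity in `M₂(B)` being positivity in the C*-algebra of `2 × 2` matrices over `B`. -/
def IsCPKernelM (K : X → X → A → Matrix (Fin 2) (Fin 2) B) : Prop :=
  ∀ (n : ℕ) (x : Fin n → X) (a : Fin n → A) (b : Fin n → Matrix (Fin 2) (Fin 2) B),
    MatPos (∑ i : Fin n, ∑ j : Fin n, (b i)ᴴ * (K (x i) (x j) (star (a i) * a j)) * b j)

/-- Complete positivity for a kernel on `X` with values in the maps `M₂(A) → M₂(B)`. -/
def IsCPKernelMM (K : X → X → Matrix (Fin 2) (Fin 2) A → Matrix (Fin 2) (Fin 2) B) : Prop :=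
  ∀ (n : ℕ) (x : Fin n → X) (c : Fin n → Matrix (Fin 2) (Fin 2) A)
    (d : Fin n → Matrix (Fin 2) (Fin 2) B),
    MatPos (∑ i : Fin n, ∑ j : Fin n, (d i)ᴴ * (K (x i) (x j) ((c i)ᴴ * c j)) * d j)

/-- The `2 × 2` block map `M₂(M_ι(A)) → M₂(M_ι(B))` determined by four maps
`M_ι(A) → M_ι(B)`, realized on `M_{2·ι}` via the canonical shuffle. -/
def blockMap {ι : Type*} (f : Fin 2 → Fin 2 → (Matrix ι ι A → Matrix ι ι B))
    (M : Matrix (Fin 2 × ι) (Fin 2 × ι) A) : Matrix (Fin 2 × ι) (Fin 2 × ι) B :=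
  Matrix.of fun p q => f p.1 q.1 (Matrix.of fun i j => M (p.1, i) (q.1, j)) p.2 q.2

end Defs

/-!
Both conditions are positivity statements for `B`-valued forms `b ↦ ∑ p q, (b p)⋆ T p q b q`.
A matrix `T` over a C⋆-algebra factors as `N⋆ N` iff its form is nonnegative: the form is then
self-adjoint, so `T` is hermitian by polarization, and testing the form on the columns of `T⁻`
kills the negative part. The form of the amplified Schur image of `N⋆ N` is a sum, over the rows
of `N`, of instances of kernel positivity. Conversely, kernel positivity at `(xᵢ, aᵢ)` is
positivity of the Schur image of the rank-one matrix `(aᵢ⋆ aⱼ)`, and completely positive maps are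
positive.
-/

open Finset

/-- Testing `star x * a * x` at `x = a⁻ = R⋆ R` gives `(R a⁻)⋆ (R a⁻) = -(a⁻ a a⁻)`, which the
faithful family `φ` forces to vanish. -/
lemma CStarAlgebra.exists_eq_star_mul_self_of_map_star_mul_mul_nonneg {A B ι : Type*}
    [CStarAlgebra A] [AddCommGroup B] [PartialOrder B] [IsOrderedAddMonoid B] (φ : ι → A →+ B)
    (hφ : ∀ w : A, (∀ i, φ i (star w * w) ≤ 0) → w = 0) {a : A} (ha : IsSelfAdjoint a)
    (h : ∀ i x, 0 ≤ φ i (star x * a * x)) : ∃ b, a = star b * b := by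
  let _ := CStarAlgebra.spectralOrder A
  let _ := CStarAlgebra.spectralOrderedRing A
  refine CStarAlgebra.nonneg_iff_eq_star_mul_self.mp <|
    CStarAlgebra.nonneg_iff_isSelfAdjoint_and_negPart_eq_zero.mpr ⟨ha, ?_⟩
  obtain ⟨R, hR⟩ := CStarAlgebra.nonneg_iff_eq_star_mul_self.mp (CFC.negPart_nonneg a)
  set N := a⁻
  have hN : IsSelfAdjoint N := (CFC.negPart_nonneg a).isSelfAdjoint
  have hcube : star (R * N) * (R * N) = -(star N * a * N) := calc
    star (R * N) * (R * N) = N * (star R * R) * N := by rw [star_mul, hN.star_eq]; noncomm_ring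
    _ = -(star N * (a⁺ - N) * N) := by
      rw [← hR, hN.star_eq, mul_sub, CFC.negPart_mul_posPart]; noncomm_ring
    _ = -(star N * a * N) := by rw [CFC.posPart_sub_negPart a ha]
  have hRN : R * N = 0 := hφ _ fun i => by
    rw [hcube, map_neg, neg_nonpos]
    exact h i N
  refine (CStarRing.star_mul_self_eq_zero_iff N).mp ?_
  rw [hN.star_eq]
  nth_rw 1 [hR]
  rw [mul_assoc, hRN, mul_zero]

namespace Matrix

lemma eq_zero_of_diag_conjTranspose_mul_self_nonpos {P Q B : Type*} [Fintype Q]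
    [NonUnitalNormedRing B] [StarRing B] [CStarRing B] [PartialOrder B] [StarOrderedRing B]
    {W : Matrix Q P B} (h : ∀ j, (Wᴴ * W) j j ≤ 0) : W = 0 := by
  ext r j
  have hsum : ∑ r, star (W r j) * W r j = 0 :=
    le_antisymm (by simpa [mul_apply] using h j) (sum_nonneg fun r _ => star_mul_self_nonneg _)
  have := (sum_eq_zero_iff_of_nonneg fun r _ => star_mul_self_nonneg (W r j)).mp hsum r
    (mem_univ r)
  exact (CStarRing.star_mul_self_eq_zero_iff _).mp this

variable {P Q B : Type*} [Fintype P]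

def sesqForm [NonUnitalNonAssocSemiring B] [Star B] (T : Matrix P P B) (u v : P → B) : B :=
  ∑ p, ∑ q, star (u p) * T p q * v q

section Semiring

variable [NonUnitalSemiring B] [StarRing B]

lemma sesqForm_sum {ι : Type*} (s : Finset ι) (T : ι → Matrix P P B) (u v : P → B) :
    sesqForm (∑ r ∈ s, T r) u v = ∑ r ∈ s, sesqForm (T r) u v := by
  simp only [sesqForm, sum_apply, mul_sum, sum_mul]
  rw [Finset.sum_comm (s := s)]
  exact sum_congr rfl fun _ _ => Finset.sum_comm

lemma sesqForm_add_left (T : Matrix P P B) (u w v : P → B) :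
    sesqForm T (u + w) v = sesqForm T u v + sesqForm T w v := by
  simp only [sesqForm, Pi.add_apply, star_add, add_mul, sum_add_distrib]

lemma sesqForm_add_right (T : Matrix P P B) (u v w : P → B) :
    sesqForm T u (v + w) = sesqForm T u v + sesqForm T u w := by
  simp only [sesqForm, Pi.add_apply, mul_add, sum_add_distrib]

lemma star_sesqForm (T : Matrix P P B) (u v : P → B) :
    star (sesqForm T u v) = sesqForm Tᴴ v u := by
  simp only [sesqForm, star_sum, star_mul, star_star, conjTranspose_apply, mul_assoc]
  exact Finset.sum_comm

lemma sesqForm_submatrix_equiv [Fintype Q] (T : Matrix P P B) (e : Q ≃ P) (u v : P → B) :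
    sesqForm (T.submatrix e e) (u ∘ e) (v ∘ e) = sesqForm T u v := by
  simp only [sesqForm, submatrix_apply, Function.comp_apply]
  rw [← e.sum_comp]
  exact sum_congr rfl fun p _ => e.sum_comp fun q => star (u (e p)) * T (e p) q * v q

lemma conjTranspose_mul_mul_apply (T : Matrix P P B) (N : Matrix P Q B) (i j : Q) :
    (Nᴴ * T * N) i j = sesqForm T (fun p => N p i) (fun p => N p j) := by
  simp only [sesqForm, mul_apply, conjTranspose_apply, sum_mul]
  exact Finset.sum_comm

lemma sesqForm_conjTranspose_mul_self [Fintype Q] (N : Matrix Q P B) (b : P → B) :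
    sesqForm (Nᴴ * N) b b = ∑ r, star ((N *ᵥ b) r) * (N *ᵥ b) r := by
  simp only [sesqForm, mulVec, dotProduct, mul_apply, conjTranspose_apply, star_sum, star_mul,
    sum_mul, mul_sum, mul_assoc]
  conv_lhs => rw [Finset.sum_comm]; enter [2, q]; rw [Finset.sum_comm]
  exact Finset.sum_comm

end Semiring

lemma sesqForm_sub [NonUnitalRing B] [StarRing B] (T S : Matrix P P B) (u v : P → B) :
    sesqForm (T - S) u v = sesqForm T u v - sesqForm S u v := by
  simp only [sesqForm, sub_apply, mul_sub, sub_mul, sum_sub_distrib]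

lemma sesqForm_single_single [Semiring B] [StarRing B] [DecidableEq P] (T : Matrix P P B)
    (p q : P) : sesqForm T (Pi.single p 1) (Pi.single q 1) = T p q := by
  simp [sesqForm, Pi.single_apply, apply_ite (star : B → B)]

section ComplexAlgebra

variable [Ring B] [StarRing B] [Algebra ℂ B]

lemma sesqForm_smul_left [StarModule ℂ B] (T : Matrix P P B) (c : ℂ) (u v : P → B) :
    sesqForm T (c • u) v = star c • sesqForm T u v := by
  simp only [sesqForm, Pi.smul_apply, star_smul, smul_mul_assoc, smul_sum]

lemma sesqForm_smul_right (T : Matrix P P B) (c : ℂ) (u v : P → B) :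
    sesqForm T u (c • v) = c • sesqForm T u v := by
  simp only [sesqForm, Pi.smul_apply, mul_smul_comm, smul_sum]

lemma eq_zero_of_sesqForm_self_eq_zero [StarModule ℂ B] {T : Matrix P P B}
    (h : ∀ b, sesqForm T b b = 0) : T = 0 := by
  classical
  have cross : ∀ u v, sesqForm T u v + sesqForm T v u = 0 := fun u v => by
    have := h (u + v)
    rw [sesqForm_add_left, sesqForm_add_right, sesqForm_add_right, h u, h v] at this
    simpa only [zero_add, add_zero] using this
  ext p q
  set u : P → B := Pi.single p 1
  set v : P → B := Pi.single q 1
  have h₁ := cross u v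
  have h₂ := cross u (Complex.I • v)
  rw [sesqForm_smul_left, sesqForm_smul_right, Complex.star_def, Complex.conj_I] at h₂
  have : (2 * Complex.I) • sesqForm T u v = 0 := by
    linear_combination (norm := module) Complex.I • h₁ + h₂
  simpa [u, v, sesqForm_single_single] using this

lemma isHermitian_of_sesqForm_nonneg [StarModule ℂ B] [PartialOrder B] [StarOrderedRing B]
    {T : Matrix P P B} (h : ∀ b, 0 ≤ sesqForm T b b) : T.IsHermitian := by
  rw [IsHermitian, ← sub_eq_zero]
  refine eq_zero_of_sesqForm_self_eq_zero fun b => ?_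
  rw [sesqForm_sub, ← star_sesqForm, (h b).isSelfAdjoint.star_eq, sub_self]

end ComplexAlgebra

lemma matPos_of_sesqForm_nonneg [CStarAlgebra B] [PartialOrder B] [StarOrderedRing B]
    {T : Matrix P P B} (h : ∀ b, 0 ≤ sesqForm T b b) : MatPos T := by
  classical
  exact CStarAlgebra.exists_eq_star_mul_self_of_map_star_mul_mul_nonneg
    (A := CStarMatrix P P B)
    (fun j => { toFun := fun M => M j j, map_zero' := rfl, map_add' := fun _ _ => rfl })
    (fun W hW => eq_zero_of_diag_conjTranspose_mul_self_nonpos hW)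
    (isHermitian_of_sesqForm_nonneg h) fun j N =>
      le_of_le_of_eq (h _) (conjTranspose_mul_mul_apply T (CStarMatrix.ofMatrix.symm N) j j).symm

end Matrix

open Matrix

section MatPos

variable {ι κ : Type*} [Fintype ι] [Fintype κ]

lemma MatPos.submatrix_equiv {R : Type*} [NonUnitalSemiring R] [StarRing R] {M : Matrix ι ι R}
    (hM : MatPos M) (e : κ ≃ ι) : MatPos (M.submatrix e e) := by
  obtain ⟨N, rfl⟩ := hM
  exact ⟨N.submatrix e e, by rw [conjTranspose_submatrix, submatrix_mul_equiv]⟩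

lemma matPos_vecMulVec_star_self {R : Type*} [NonUnitalSemiring R] [StarRing R] (a : ι → R) :
    MatPos (vecMulVec (star a) a) := by
  classical
  rcases isEmpty_or_nonempty ι with _ | ⟨⟨i₀⟩⟩
  · exact ⟨0, Subsingleton.elim _ _⟩
  · refine ⟨of (Pi.single i₀ a), ?_⟩
    ext p q
    simp [Matrix.mul_apply, Pi.single_apply, ite_apply, vecMulVec_apply]

lemma matPos_iff_sesqForm_nonneg {B : Type*} [CStarAlgebra B] [PartialOrder B]
    [StarOrderedRing B] {T : Matrix ι ι B} : MatPos T ↔ ∀ b, 0 ≤ T.sesqForm b b := by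
  constructor
  · rintro ⟨N, rfl⟩ b
    rw [sesqForm_conjTranspose_mul_self]
    exact sum_nonneg fun r _ => star_mul_self_nonneg _
  · exact matPos_of_sesqForm_nonneg

end MatPos

section Kernel

variable {X A B : Type*} [CStarAlgebra A] [CStarAlgebra B]

lemma IsCPMap.matPos_apply {ι : Type*} [Fintype ι] {φ : Matrix ι ι A → Matrix ι ι B}
    (hφ : IsCPMap φ) {M : Matrix ι ι A} (hM : MatPos M) : MatPos (φ M) := by
  let e : Fin 1 × ι ≃ ι := Equiv.uniqueProd ι (Fin 1)
  have h : MatPos ((φ M).submatrix e e) := hφ 1 _ (hM.submatrix_equiv e)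
  simpa using h.submatrix_equiv e.symm

variable {k : X → X → A →L[ℂ] B}

lemma IsCPKernel.sesqForm_nonneg [PartialOrder B] (hk : IsCPKernel k) {ι : Type*} [Fintype ι]
    (y : ι → X) (a : ι → A) (b : ι → B) :
    0 ≤ sesqForm (of fun i j => k (y i) (y j) (star (a i) * a j)) b b := by
  let e := (Fintype.equivFin ι).symm
  rw [← sesqForm_submatrix_equiv _ e]
  exact hk _ (y ∘ e) (a ∘ e) (b ∘ e)

lemma IsCPKernel.matPos_conjTranspose_mul_self [PartialOrder B] [StarOrderedRing B]
    (hk : IsCPKernel k) {ι : Type*} [Fintype ι] (y : ι → X) (N : Matrix ι ι A) :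
    MatPos (of fun p q => k (y p) (y q) ((Nᴴ * N) p q)) := by
  have hsum : (of fun p q => k (y p) (y q) ((Nᴴ * N) p q))
      = ∑ r, of fun p q => k (y p) (y q) (star (N r p) * N r q) := by
    ext p q
    simp [Matrix.mul_apply, Matrix.sum_apply]
  rw [matPos_iff_sesqForm_nonneg, hsum]
  intro b
  rw [sesqForm_sum]
  exact sum_nonneg fun r _ => hk.sesqForm_nonneg y (N r) b

end Kernel

/-- a kernel is completely positive iff all its finite Schur product maps
are completely positive maps. -/
theorem cp_kernel_iff_schur_maps_cp {X : Type*} {A : Type*} [CStarAlgebra A]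
    {B : Type*} [CStarAlgebra B] [PartialOrder B] [StarOrderedRing B]
    (k : X → X → A →L[ℂ] B) :
    IsCPKernel k ↔ ∀ (n : ℕ) (x : Fin n → X), IsCPMap (schurMap k x) := by
  constructor
  · rintro hk n x m M ⟨N, rfl⟩
    exact hk.matPos_conjTranspose_mul_self (fun p => x p.2) N
  · intro h n x a b
    exact matPos_iff_sesqForm_nonneg.mp ((h n x).matPos_apply (matPos_vecMulVec_star_self a)) b
end

section
/- Let k, L₁, L₂ be kernels on X with values in L(A,B) such that the M₂(B)-valued kernel K defined by K(x,y)[a] = [[L₁(x,y)[a], k(x,y)[a]], [k*(x,y)[a], L₂(x,y)[a]]] is completely positive. Then the following kernel inequalities hold: −(1/2)(L₁ + L₂) ≤ (1/2)(k + k*) ≤ (1/2)(L₁ + L₂) and −(1/2)(L₁ + L₂) ≤ (−i/2)(k − k*) ≤ (1/2)(L₁ + L₂). -/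
open scoped ComplexOrder InnerProductSpace Matrix

/-!
Test the completely positive `M₂(B)`-valued kernel against the columns `(bᵢ, γ bᵢ)`: the
`(0,0)` entry of the resulting positive matrix shows that `L₁ + γ k + γ̄ k* + |γ|² L₂` is a
completely positive kernel. Halving it for `γ = -1, 1, i, -i` gives the four inequalities.
-/

theorem MatPos.apply_self_nonneg {R ι : Type*} [Fintype ι] [NonUnitalSemiring R] [PartialOrder R]
    [StarRing R] [StarOrderedRing R] {M : Matrix ι ι R} (hM : MatPos M) (i : ι) :
    0 ≤ M i i := by
  obtain ⟨N, rfl⟩ := hM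
  simpa [Matrix.mul_apply] using Finset.sum_nonneg fun r _ => star_mul_self_nonneg (N r i)

section Kernels

variable {X A B : Type*} [CStarAlgebra A] [CStarAlgebra B] [PartialOrder B] [StarOrderedRing B]

theorem IsCPKernel.smul {k : X → X → A →L[ℂ] B} (hk : IsCPKernel k) {r : ℝ} (hr : 0 ≤ r) :
    IsCPKernel fun x y => r • k x y := by
  intro n x a b
  have hsum : ∑ i, ∑ j, star (b i) * ((r • k (x i) (x j)) (star (a i) * a j)) * b j =
      r • ∑ i, ∑ j, star (b i) * (k (x i) (x j) (star (a i) * a j)) * b j := by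
    simp only [Finset.smul_sum, smul_apply, mul_smul_comm, smul_mul_assoc]
  rw [hsum]
  exact smul_nonneg hr (hk n x a b)

theorem IsCPKernelM.isCPKernel_compress {k L₁ L₂ : X → X → A →L[ℂ] B}
    (hK : IsCPKernelM fun x y a => !![L₁ x y a, k x y a; kadj k x y a, L₂ x y a]) (γ : ℂ) :
    IsCPKernel fun x y => L₁ x y + γ • k x y + star γ • kadj k x y + (star γ * γ) • L₂ x y := by
  intro n x a b
  obtain ⟨N, hN⟩ := hK n x a fun i => !![b i, 0; γ • b i, 0]
  convert (show MatPos (Nᴴ * N) from ⟨N, rfl⟩).apply_self_nonneg 0 using 1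
  rw [← hN, Matrix.sum_apply]
  refine Finset.sum_congr rfl fun i _ => ?_
  rw [Matrix.sum_apply]
  refine Finset.sum_congr rfl fun j _ => ?_
  simp only [add_apply, smul_apply, kadj_apply, star_mul, star_star, star_smul, smul_smul,
    mul_add, add_mul, Algebra.mul_smul_comm, Algebra.smul_mul_assoc, Matrix.mul_apply,
    Matrix.conjTranspose_apply, Matrix.of_apply, Matrix.cons_val', Matrix.cons_val_zero,
    Matrix.cons_val_one, Matrix.cons_val_fin_one, Fin.sum_univ_two]
  abel

end Kernels

/-- if the 2×2 matrix kernel `[[L₁, k], [k*, L₂]]` is completely positive,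
then `-(1/2)(L₁+L₂) ≤ (1/2)(k+k*) ≤ (1/2)(L₁+L₂)` and
`-(1/2)(L₁+L₂) ≤ (-i/2)(k-k*) ≤ (1/2)(L₁+L₂)` as kernel inequalities. -/
theorem off_diagonal_cp_gives_kernel_inequalities {X : Type*} {A : Type*} [CStarAlgebra A]
    {B : Type*} [CStarAlgebra B] [PartialOrder B] [StarOrderedRing B]
    (k L₁ L₂ : X → X → A →L[ℂ] B)
    (hK : IsCPKernelM fun x y a =>
      !![L₁ x y a, k x y a; kadj k x y a, L₂ x y a]) :
    (IsCPKernel fun x y =>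
      ((1 : ℂ)/2) • (L₁ x y + L₂ x y) - ((1 : ℂ)/2) • (k x y + kadj k x y)) ∧
    (IsCPKernel fun x y =>
      ((1 : ℂ)/2) • (k x y + kadj k x y) + ((1 : ℂ)/2) • (L₁ x y + L₂ x y)) ∧
    (IsCPKernel fun x y =>
      ((1 : ℂ)/2) • (L₁ x y + L₂ x y) - ((-Complex.I)/2) • (k x y - kadj k x y)) ∧
    (IsCPKernel fun x y =>
      ((-Complex.I)/2) • (k x y - kadj k x y) + ((1 : ℂ)/2) • (L₁ x y + L₂ x y)) := by
  have half (γ : ℂ) : IsCPKernel fun x y => (1 / 2 : ℝ) •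
      (L₁ x y + γ • k x y + star γ • kadj k x y + (star γ * γ) • L₂ x y) :=
    (hK.isCPKernel_compress γ).smul (by norm_num)
  refine ⟨?_, ?_, ?_, ?_⟩
  · convert half (-1) using 3
    simp only [star_neg, star_one, neg_mul_neg, one_mul]
    module
  · convert half 1 using 3
    simp only [star_one, one_mul]
    module
  · convert half Complex.I using 3
    simp only [Complex.star_def, Complex.conj_I, neg_mul, Complex.I_mul_I, neg_neg]
    module
  · convert half (-Complex.I) using 3
    simp only [star_neg, Complex.star_def, Complex.conj_I, neg_neg, mul_neg, Complex.I_mul_I]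
    module
end

section
/- Let k be a kernel on X with values in L(A,B). Then the following are equivalent: (a) there exist completely positive kernels L₁, L₂ with values in L(A,B) such that the kernel (x,y) ↦ (a ↦ [[L₁(x,y)[a], k(x,y)[a]], [k*(x,y)[a], L₂(x,y)[a]]]), with values in L(A, M₂(B)), is completely positive; (b) there exist completely positive kernels L₁, L₂ with values in L(A,B) such that the kernel (x,y) ↦ ((a_{uv})_{u,v=1,2} ↦ [[L₁(x,y)[a₁₁], k(x,y)[a₁₂]], [k*(x,y)[a₂₁], L₂(x,y)[a₂₂]]]), with values in L(M₂(A), M₂(B)), is completely positive. -/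
open scoped ComplexOrder InnerProductSpace Matrix

/-!
Let `F` be the `2 × 2` matrix of kernels `[[L₁, k], [k*, L₂]]`, so that the two kernels of the
statement are `Ψ(a) = (F_rs a)_rs` and `Φ(M) = (F_rs M_rs)_rs`.

For (b) ⇒ (a), test `Φ` on the matrices `cᵢ` whose first row is `(aᵢ, aᵢ)` and
whose second row vanishes: every entry of `cᵢᴴ cⱼ` is then `aᵢ* aⱼ`.

For (a) ⇒ (b), write `cᵢᴴ cⱼ = ∑_w (row_w cᵢ)ᴴ (row_w cⱼ)`. For a fixed row `w`, cutting `dᵢ`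
into its rows `E_uu dᵢ` turns `∑ dᵢᴴ Φ((row_w cᵢ)ᴴ (row_w cⱼ)) dⱼ` into the complete positivity
sum of `Ψ` for the family `(cᵢ(w,u), E_uu dᵢ)` indexed by the pairs `(i,u)`. Summing
over `w` preserves positivity, since positive matrices over a C⋆-algebra form a cone.
-/

open Matrix

section MatPos

/- The C⋆-algebra lemma, restated for an abstract C⋆-algebra: at `CStarMatrix ι ι R` instance
search does not find the real continuous functional calculus it is stated with. -/
private theorem nonneg_iff_eq_star_mul_self {C : Type*} [CStarAlgebra C] [PartialOrder C]
    [StarOrderedRing C] {a : C} : 0 ≤ a ↔ ∃ b, a = star b * b :=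
  CStarAlgebra.nonneg_iff_eq_star_mul_self

variable {R ι : Type*} [CStarAlgebra R] [PartialOrder R] [StarOrderedRing R] [Fintype ι]
  [DecidableEq ι]

theorem matPos_iff_nonneg {M : Matrix ι ι R} : MatPos M ↔ 0 ≤ CStarMatrix.ofMatrix M :=
  (nonneg_iff_eq_star_mul_self (a := CStarMatrix.ofMatrix M)).symm

theorem MatPos.sum {κ : Type*} {s : Finset κ} {M : κ → Matrix ι ι R}
    (h : ∀ w ∈ s, MatPos (M w)) : MatPos (∑ w ∈ s, M w) :=
  matPos_iff_nonneg.2 <| Finset.sum_nonneg fun w hw => matPos_iff_nonneg.1 (h w hw)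

end MatPos

section MatrixAlgebra

variable {R ι : Type*} [Fintype ι]

theorem conjTranspose_mul_eq_sum_vecMulVec [NonUnitalSemiring R] [StarRing R]
    (M N : Matrix ι ι R) : Mᴴ * N = ∑ w, vecMulVec (star (M w)) (N w) := by
  ext u v
  simp [mul_apply, Matrix.sum_apply, vecMulVec_apply]

variable [DecidableEq ι]

theorem conjTranspose_replicateCol_single_mul [NonUnitalSemiring R] [StarRing R] (i₀ : ι)
    (a b : R) :
    (replicateCol ι (Pi.single i₀ a))ᴴ * replicateCol ι (Pi.single i₀ b) =
      of fun _ _ => star a * b := by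
  rw [conjTranspose_replicateCol, replicateRow_mul_replicateCol, ← Pi.single_star,
    single_dotProduct, Pi.single_eq_same]

theorem conjTranspose_mul_mul_eq_sum_single [Semiring R] [StarRing R]
    (D D' N : Matrix ι ι R) (P : ι → ι → Matrix ι ι R) (hP : ∀ u v, P u v u v = N u v) :
    Dᴴ * N * D' = ∑ u, ∑ v, (single u u 1 * D)ᴴ * P u v * (single v v 1 * D') := by
  have hN : N = ∑ u, ∑ v, single u u 1 * P u v * single v v 1 := by
    simp only [single_mul_mul_single, one_mul, mul_one, hP]
    exact matrix_eq_sum_single N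
  rw [hN]
  simp only [Matrix.mul_sum, Matrix.sum_mul, conjTranspose_mul, conjTranspose_single, star_one,
    Matrix.mul_assoc]

end MatrixAlgebra

section Kernel

variable {X A B : Type*} [CStarAlgebra A] [CStarAlgebra B]

theorem IsCPKernelM.matPos_sum {K : X → X → A → Matrix (Fin 2) (Fin 2) B} (hK : IsCPKernelM K)
    {ι : Type*} [Fintype ι] (x : ι → X) (a : ι → A) (b : ι → Matrix (Fin 2) (Fin 2) B) :
    MatPos (∑ i, ∑ j, (b i)ᴴ * K (x i) (x j) (star (a i) * a j) * b j) := by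
  have e := (Fintype.equivFin ι).symm
  simp_rw [← e.sum_comp]
  exact hK _ (x ∘ e) (a ∘ e) (b ∘ e)

variable (F : X → X → Matrix (Fin 2) (Fin 2) (A →L[ℂ] B))

theorem IsCPKernelM.matPos_sum_vecMulVec (hK : IsCPKernelM fun x y a => of fun r s => F x y r s a)
    {n : ℕ} (x : Fin n → X) (a : Fin n → Fin 2 → A) (d : Fin n → Matrix (Fin 2) (Fin 2) B) :
    MatPos (∑ i, ∑ j, (d i)ᴴ *
      (of fun r s => F (x i) (x j) r s (vecMulVec (star (a i)) (a j) r s)) * d j) := by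
  have hsplit : ∀ i j, (d i)ᴴ *
      (of fun r s => F (x i) (x j) r s (vecMulVec (star (a i)) (a j) r s)) * d j =
      ∑ u, ∑ v, (single u u 1 * d i)ᴴ *
        (of fun r s => F (x i) (x j) r s (star (a i u) * a j v)) * (single v v 1 * d j) :=
    fun i j => conjTranspose_mul_mul_eq_sum_single _ _ _ _ fun u v => rfl
  have hrows := hK.matPos_sum (ι := Fin n × Fin 2) (fun p => x p.1) (fun p => a p.1 p.2)
    (fun p => single p.2 p.2 1 * d p.1)
  simp only [Fintype.sum_prod_type] at hrows
  simp only [hsplit]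
  convert hrows using 1
  exact Finset.sum_congr rfl fun i _ => Finset.sum_comm

theorem isCPKernelM_iff_isCPKernelMM [PartialOrder B] [StarOrderedRing B] :
    IsCPKernelM (fun x y a => of fun r s => F x y r s a) ↔
      IsCPKernelMM (fun x y M => of fun r s => F x y r s (M r s)) := by
  constructor
  · intro hK n x c d
    have hsplit : ∀ i j, (d i)ᴴ * (of fun r s => F (x i) (x j) r s (((c i)ᴴ * c j) r s)) * d j =
        ∑ w, (d i)ᴴ *
          (of fun r s => F (x i) (x j) r s (vecMulVec (star (c i w)) (c j w) r s)) * d j := by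
      intro i j
      rw [conjTranspose_mul_eq_sum_vecMulVec (c i), ← Matrix.sum_mul, ← Matrix.mul_sum]
      congr 2
      ext r s
      simp only [Matrix.sum_apply, of_apply, map_sum]
    simp only [hsplit]
    rw [Finset.sum_comm_cycle]
    exact MatPos.sum fun w _ => hK.matPos_sum_vecMulVec F x (fun i => c i w) d
  · intro hΦ n x a b
    simpa only [conjTranspose_replicateCol_single_mul, of_apply] using
      hΦ n x (fun i => replicateCol (Fin 2) (Pi.single 0 (a i))) b

end Kernel

/-- Haagerup's lemma for kernels: there exist completely positive
kernels `L₁, L₂` making the `L(A, M₂(B))`-valued kernel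
`a ↦ [[L₁[a], k[a]], [k*[a], L₂[a]]]` completely positive iff there exist completely
positive kernels `L₁, L₂` making the `L(M₂(A), M₂(B))`-valued kernel
`(a_{uv}) ↦ [[L₁[a₁₁], k[a₁₂]], [k*[a₂₁], L₂[a₂₂]]]` completely positive. -/
theorem haagerup_trick_for_kernels {X : Type*} {A : Type*} [CStarAlgebra A]
    {B : Type*} [CStarAlgebra B] [PartialOrder B] [StarOrderedRing B]
    (k : X → X → A →L[ℂ] B) :
    (∃ L₁ L₂ : X → X → A →L[ℂ] B, IsCPKernel L₁ ∧ IsCPKernel L₂ ∧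
      IsCPKernelM fun x y a =>
        !![L₁ x y a, k x y a; kadj k x y a, L₂ x y a]) ↔
    (∃ L₁ L₂ : X → X → A →L[ℂ] B, IsCPKernel L₁ ∧ IsCPKernel L₂ ∧
      IsCPKernelMM fun x y M =>
        !![L₁ x y (M 0 0), k x y (M 0 1);
           kadj k x y (M 1 0), L₂ x y (M 1 1)]) := by
  refine exists₂_congr fun L₁ L₂ => and_congr_right fun _ => and_congr_right fun _ => ?_
  convert isCPKernelM_iff_isCPKernelMM fun x y => !![L₁ x y, k x y; kadj k x y, L₂ x y]
    using 2 <;> ext x y a r s <;> fin_cases r <;> fin_cases s <;> rfl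
end
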